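/- Fix N ≥ 1, Δ > 0 and ε > 0. For y ∈ ℝ^N, let μ_y be the law of y + (L_1, …, L_N) where L_1, …, L_N are i.i.d. real random variables with Laplace(0, Δ/ε) distribution, i.e., with density x ↦ (ε/(2Δ))·exp(−ε|x|/Δ) with respect to Lebesgue measure. If y, y' ∈ ℝ^N satisfy ‖y − y'‖₁ ≤ Δ, then for every measurable set A ⊆ ℝ^N, μ_y(A) ≤ e^ε · μ_{y'}(A). In other words, the Laplace Mechanism satisfies ε-differential privacy. -/
import Mathlib

open MeasureTheory

/-- The law of the Laplace Mechanism output `y + (L_1, …, L_N)` with `L_i` i.i.d.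
`Laplace(0, Δ/ε)`: the product measure whose `i`-th factor has density
`x ↦ (ε/(2Δ))·exp(−ε|x − y_i|/Δ)` with respect to Lebesgue measure. -/
noncomputable def laplaceMech (N : ℕ) (Δ ε : ℝ) (y : Fin N → ℝ) : Measure (Fin N → ℝ) :=
  Measure.pi fun i =>
    volume.withDensity fun x =>
      ENNReal.ofReal (ε / (2 * Δ) * Real.exp (-(ε * |x - y i|) / Δ))

lemma lintegral_fin_prod {n : ℕ} (f : Fin n → ℝ → ENNReal) (hf : ∀ i, Measurable (f i)) :
    ∫⁻ x : Fin n → ℝ, ∏ i, f i (x i) ∂(Measure.pi fun _ => volume) = ∏ i, ∫⁻ t, f i t := by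
  induction n with
  | zero => simp
  | succ n ih =>
    have h := measurePreserving_piFinSuccAbove (fun _ : Fin (n + 1) => (volume : Measure ℝ)) 0
    have hg : Measurable fun p : ℝ × (Fin n → ℝ) => f 0 p.1 * ∏ j, f (Fin.succ j) (p.2 j) := by
      refine ((hf 0).comp measurable_fst).mul ?_
      exact Finset.measurable_prod _ fun j _ =>
        (hf _).comp ((measurable_pi_apply j).comp measurable_snd)
    calc ∫⁻ x : Fin (n + 1) → ℝ, ∏ i, f i (x i) ∂(Measure.pi fun _ => volume)
        = ∫⁻ x : Fin (n + 1) → ℝ,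
            f 0 ((MeasurableEquiv.piFinSuccAbove (fun _ => ℝ) 0 x).1) *
              ∏ j, f (Fin.succ j) ((MeasurableEquiv.piFinSuccAbove (fun _ => ℝ) 0 x).2 j)
            ∂(Measure.pi fun _ => volume) := by
          refine lintegral_congr fun x => ?_
          rw [Fin.prod_univ_succ]
          simp [MeasurableEquiv.piFinSuccAbove, Fin.zero_succAbove, Fin.tail]
      _ = ∫⁻ p : ℝ × (Fin n → ℝ), f 0 p.1 * ∏ j, f (Fin.succ j) (p.2 j)
            ∂((volume : Measure ℝ).prod (Measure.pi fun _ => volume)) := h.lintegral_comp hg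
      _ = (∫⁻ t, f 0 t) * ∏ j, ∫⁻ t, f (Fin.succ j) t := by
          have hgm : AEMeasurable (fun z : Fin n → ℝ => ∏ j, f (Fin.succ j) (z j))
              (Measure.pi fun _ => (volume : Measure ℝ)) :=
            (Finset.measurable_prod Finset.univ fun j _ =>
              (hf (Fin.succ j)).comp (measurable_pi_apply j)).aemeasurable
          rw [lintegral_prod_mul (hf 0).aemeasurable hgm, ih _ fun j => hf _]
      _ = ∏ i, ∫⁻ t, f i t := by rw [Fin.prod_univ_succ]

lemma pi_withDensity {n : ℕ} (f : Fin n → ℝ → ENNReal) (hf : ∀ i, Measurable (f i))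
    (hfin : ∀ i x, f i x ≠ ⊤) :
    Measure.pi (fun i => volume.withDensity (f i))
      = (Measure.pi fun _ : Fin n => (volume : Measure ℝ)).withDensity
          fun x => ∏ i, f i (x i) := by
  haveI : ∀ i, SigmaFinite (volume.withDensity (f i)) := fun i =>
    SigmaFinite.withDensity_of_ne_top (ae_of_all _ (hfin i))
  refine Measure.pi_eq fun s hs => ?_
  rw [withDensity_apply _ (MeasurableSet.univ_pi hs),
    ← lintegral_indicator (MeasurableSet.univ_pi hs)]
  have key : ∀ x : Fin n → ℝ,
      (Set.univ.pi s).indicator (fun x => ∏ i, f i (x i)) x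
        = ∏ i, (s i).indicator (f i) (x i) := by
    intro x
    by_cases hx : x ∈ Set.univ.pi s
    · rw [Set.indicator_of_mem hx]
      exact Finset.prod_congr rfl fun i _ =>
        (Set.indicator_of_mem (hx i trivial) _).symm
    · rw [Set.indicator_of_notMem hx]
      rw [Set.mem_univ_pi] at hx
      push_neg at hx
      obtain ⟨i, hi⟩ := hx
      exact (Finset.prod_eq_zero (Finset.mem_univ i)
        (Set.indicator_of_notMem hi _)).symm
  simp_rw [key]
  rw [lintegral_fin_prod _ fun i => (hf i).indicator (hs i)]
  exact (Finset.prod_congr rfl fun i _ => by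
    rw [withDensity_apply _ (hs i), ← lintegral_indicator (hs i)]).symm

/-- The Laplace Mechanism satisfies `ε`-differential privacy: if `‖y − y'‖₁ ≤ Δ`,
then for every measurable `A ⊆ ℝ^N`, `μ_y(A) ≤ e^ε · μ_{y'}(A)`. -/
theorem stmt_2 (N : ℕ) (hN : 1 ≤ N) (Δ ε : ℝ) (hΔ : 0 < Δ) (hε : 0 < ε)
    (y y' : Fin N → ℝ) (hsens : ∑ i, |y i - y' i| ≤ Δ)
    (A : Set (Fin N → ℝ)) (hA : MeasurableSet A) :
    laplaceMech N Δ ε y A ≤ ENNReal.ofReal (Real.exp ε) * laplaceMech N Δ ε y' A := by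
  have hc : 0 ≤ ε / (2 * Δ) := by positivity
  have hmeas : ∀ z : ℝ,
      Measurable fun x : ℝ => ENNReal.ofReal (ε / (2 * Δ) * Real.exp (-(ε * |x - z|) / Δ)) := by
    intro z
    fun_prop
  rw [laplaceMech, laplaceMech,
    pi_withDensity _ (fun i => hmeas (y i)) (fun i x => ENNReal.ofReal_ne_top),
    pi_withDensity _ (fun i => hmeas (y' i)) (fun i x => ENNReal.ofReal_ne_top),
    withDensity_apply _ hA, withDensity_apply _ hA,
    ← lintegral_const_mul' _ _ ENNReal.ofReal_ne_top]
  refine lintegral_mono fun x => ?_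
  have hptr : (∏ i, ε / (2 * Δ) * Real.exp (-(ε * |x i - y i|) / Δ))
      ≤ Real.exp ε * ∏ i, ε / (2 * Δ) * Real.exp (-(ε * |x i - y' i|) / Δ) := by
    rw [Finset.prod_mul_distrib, Finset.prod_mul_distrib, ← Real.exp_sum, ← Real.exp_sum,
      ← mul_assoc, mul_comm (Real.exp ε), mul_assoc, ← Real.exp_add]
    refine mul_le_mul_of_nonneg_left (Real.exp_le_exp.2 ?_) (by positivity)
    have hbd : ∀ i, -(ε * |x i - y i|) / Δ
        ≤ ε / Δ * |y i - y' i| + -(ε * |x i - y' i|) / Δ := by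
      intro i
      have h1 : |x i - y' i| - |x i - y i| ≤ |y i - y' i| := by
        have := abs_sub_abs_le_abs_sub (x i - y' i) (x i - y i)
        have h2 : (x i - y' i) - (x i - y i) = y i - y' i := by ring
        rw [h2] at this
        linarith
      have h3 : ε / Δ * |y i - y' i| + -(ε * |x i - y' i|) / Δ
          = (ε * |y i - y' i| + -(ε * |x i - y' i|)) / Δ := by ring
      rw [h3]
      gcongr
      nlinarith [h1, hε.le]
    calc ∑ i, -(ε * |x i - y i|) / Δ
        ≤ ∑ i, (ε / Δ * |y i - y' i| + -(ε * |x i - y' i|) / Δ) :=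
          Finset.sum_le_sum fun i _ => hbd i
      _ = ε / Δ * (∑ i, |y i - y' i|) + ∑ i, -(ε * |x i - y' i|) / Δ := by
          rw [Finset.sum_add_distrib, Finset.mul_sum]
      _ ≤ ε / Δ * Δ + ∑ i, -(ε * |x i - y' i|) / Δ := by
          gcongr
      _ ≤ ε + ∑ i, -(ε * |x i - y' i|) / Δ := by
          have : ε / Δ * Δ = ε := by field_simp
          rw [this]
  calc (∏ i, ENNReal.ofReal (ε / (2 * Δ) * Real.exp (-(ε * |x i - y i|) / Δ)))
      = ENNReal.ofReal (∏ i, ε / (2 * Δ) * Real.exp (-(ε * |x i - y i|) / Δ)) :=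
        (ENNReal.ofReal_prod_of_nonneg fun i _ => by positivity).symm
    _ ≤ ENNReal.ofReal (Real.exp ε * ∏ i, ε / (2 * Δ) * Real.exp (-(ε * |x i - y' i|) / Δ)) :=
        ENNReal.ofReal_le_ofReal hptr
    _ = ENNReal.ofReal (Real.exp ε) *
          ENNReal.ofReal (∏ i, ε / (2 * Δ) * Real.exp (-(ε * |x i - y' i|) / Δ)) :=
        ENNReal.ofReal_mul (Real.exp_nonneg ε)
    _ = ENNReal.ofReal (Real.exp ε) *
          ∏ i, ENNReal.ofReal (ε / (2 * Δ) * Real.exp (-(ε * |x i - y' i|) / Δ)) := by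
        rw [ENNReal.ofReal_prod_of_nonneg fun i _ => by positivity]
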